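/- arXiv:2211.02268 — 5 statements merged into one kernel-verified Lean document; each statement's English description precedes it below -/
import Mathlib

section
/- If a set-valued map M from a convex set K ⊆ ℝⁿ to subsets of ℝᵐ is affine on K (i.e., M(ηx₁+(1-η)x₀) = ηM(x₁)+(1-η)M(x₀) in the Minkowski sense for all x₀,x₁ ∈ K and η ∈ (0,1)), and there exists a point x̄ in the relative interior of K such that M(x̄) is a singleton, then M(x) is a singleton for every x ∈ K. -/
open Pointwise

theorem stmt_0 {n m : ℕ} (K : Set (Fin n → ℝ)) (hKne : K.Nonempty) (hKconv : Convex ℝ K)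
    (M : (Fin n → ℝ) → Set (Fin m → ℝ))
    (hMne : ∀ x ∈ K, (M x).Nonempty)
    (hMaff : ∀ x₀ ∈ K, ∀ x₁ ∈ K, ∀ η ∈ Set.Ioo (0:ℝ) 1,
      M (η • x₁ + (1 - η) • x₀) = η • M x₁ + (1 - η) • M x₀)
    (xb : Fin n → ℝ) (hxb : xb ∈ intrinsicInterior ℝ K)
    (hsingle : ∃ y, M xb = {y}) :
    ∀ x ∈ K, ∃ y, M x = {y} := by
  intro x hx
  obtain ⟨yb, hyb⟩ := hsingle
  -- extract interior data
  obtain ⟨y, hy, hyx⟩ := mem_intrinsicInterior.mp hxb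
  rw [mem_interior_iff_mem_nhds, Metric.mem_nhds_iff] at hy
  obtain ⟨ε, hε, hball⟩ := hy
  -- choose small t
  set t : ℝ := ε / (2 * (‖xb - x‖ + 1)) with ht_def
  have hnorm : (0:ℝ) < ‖xb - x‖ + 1 := by positivity
  have ht : 0 < t := by positivity
  have htsmall : t * ‖xb - x‖ < ε := by
    have h1 : t * ‖xb - x‖ < t * (‖xb - x‖ + 1) := by nlinarith
    have h2 : t * (‖xb - x‖ + 1) = ε / 2 := by rw [ht_def, div_mul_eq_mul_div, div_eq_iff (by positivity)]; ring
    linarith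
  -- the point x' past xb
  set x' : Fin n → ℝ := t • (xb - x) + xb with hx'_def
  have hxs : x ∈ affineSpan ℝ K := subset_affineSpan ℝ K hx
  have hxbS : xb ∈ affineSpan ℝ K := by rw [← hyx]; exact y.2
  have hx'S : x' ∈ affineSpan ℝ K := by
    have := AffineSubspace.smul_vsub_vadd_mem (affineSpan ℝ K) t hxbS hxs hxbS
    simpa [hx'_def, vsub_eq_sub, vadd_eq_add] using this
  have hx'K : x' ∈ K := by
    have hmem : (⟨x', hx'S⟩ : affineSpan ℝ K) ∈ Metric.ball y ε := by
      rw [Metric.mem_ball, Subtype.dist_eq, hyx]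
      simp only [dist_eq_norm]
      have : x' - xb = t • (xb - x) := by simp [hx'_def]
      rw [this, norm_smul]
      simpa [abs_of_pos ht] using htsmall
    exact hball hmem
  -- the coefficient
  have h1t : (0:ℝ) < 1 + t := by linarith
  set η : ℝ := t / (1 + t) with hη_def
  have hη0 : 0 < η := by positivity
  have hη1 : η < 1 := by
    rw [hη_def, div_lt_one h1t]; linarith
  have hcomb : η • x + (1 - η) • x' = xb := by
    funext i
    simp only [Pi.add_apply, Pi.smul_apply, smul_eq_mul, hx'_def, Pi.sub_apply, hη_def]
    field_simp
    ring
  have key : {yb} = η • M x + (1 - η) • M x' := by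
    rw [← hyb, ← hcomb]
    exact hMaff x' hx'K x hx η ⟨hη0, hη1⟩
  obtain ⟨a0, ha0⟩ := hMne x hx
  obtain ⟨b, hb⟩ := hMne x' hx'K
  refine ⟨a0, Set.eq_singleton_iff_nonempty_unique_mem.mpr ⟨⟨a0, ha0⟩, ?_⟩⟩
  intro a ha
  have hmem : ∀ c ∈ M x, η • c + (1 - η) • b = yb := by
    intro c hc
    have : η • c + (1 - η) • b ∈ η • M x + (1 - η) • M x' :=
      Set.add_mem_add (Set.smul_mem_smul_set hc) (Set.smul_mem_smul_set hb)
    rw [← key] at this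
    exact this
  have := (hmem a ha).trans (hmem a0 ha0).symm
  have h2 : η • a = η • a0 := by
    have := congrArg (fun z => z - (1 - η) • b) this
    simpa using this
  exact smul_right_injective _ (ne_of_gt hη0) h2
end

section
/- For a point x in X = π(D) and a chamber C ∈ 𝒞(D), one has x ∈ ri(C) if and only if C = σ(x), where σ(x) is the intersection of the projections of all faces of D whose projection contains x. -/
/-!
A point `x` always lies in the chamber `σ x`. If it lay on the relative boundary, a supporting
hyperplane of `σ x` at `x` would cut out a proper exposed face `G ∋ x`. Face-closedness of the
chambers gives `G = σ z` for some `z`, and since `x ∈ σ z` the minimality of `σ x` forces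
`σ x ⊆ σ z = G ⊊ σ x`, a contradiction. Hence `x ∈ ri (σ x)`, and the partition property makes
`σ x` the only chamber whose relative interior contains `x`.
-/

open Set

section Separation

variable {E : Type*} [NormedAddCommGroup E] [NormedSpace ℝ E]

theorem Convex.le_of_forall_interior_le {S : Set E} (hS : Convex ℝ S)
    (hS' : (interior S).Nonempty) {g : E → ℝ} (hg : Continuous g) {c : ℝ}
    (hle : ∀ u ∈ interior S, g u ≤ c) : ∀ w ∈ S, g w ≤ c := by
  have : closure (interior S) ⊆ {u | g u ≤ c} :=
    closure_minimal hle (isClosed_le hg continuous_const)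
  rw [hS.closure_interior_eq_closure_of_nonempty_interior hS'] at this
  exact fun w hw => this (subset_closure hw)

variable [FiniteDimensional ℝ E]

theorem exists_lt_of_notMem_intrinsicInterior {C : Set E} (hC : Convex ℝ C) {x : E}
    (hxC : x ∈ C) (hx : x ∉ intrinsicInterior ℝ C) :
    ∃ l : StrongDual ℝ E, (∀ y ∈ C, l y ≤ l x) ∧ ∃ y ∈ C, l y < l x := by
  set A := affineSpan ℝ C
  have : Nonempty C := ⟨⟨x, hxC⟩⟩
  let p : A := ⟨x, subset_affineSpan ℝ C hxC⟩
  -- Work in the direction of `A`, with `x` as origin; there `C` has nonempty interior.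
  let e := AffineIsometryEquiv.vaddConst ℝ p
  have he : ∀ v, (e v : E) = v + x := fun _ => rfl
  set B : Set A.direction := e ⁻¹' ((↑) ⁻¹' C)
  have hB : Convex ℝ B := hC.affine_preimage (A.subtype.comp e.toAffineEquiv.toAffineMap)
  have hBint : (interior B).Nonempty := by
    rw [hB.interior_nonempty_iff_affineSpan_eq_top,
      show B = e.toAffineEquiv ⁻¹' ((↑) ⁻¹' C) from rfl, ← AffineSubspace.comap_span,
      affineSpan_coe_preimage_eq_top, AffineSubspace.comap_top]
  have h0 : (0 : A.direction) ∉ interior B := by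
    rw [show B = e.toHomeomorph ⁻¹' ((↑) ⁻¹' C) from rfl, ← Homeomorph.preimage_interior]
    exact fun h => hx (mem_intrinsicInterior.2 ⟨p, by simpa [e] using h, rfl⟩)
  obtain ⟨f, hf⟩ := geometric_hahn_banach_open_point hB.interior isOpen_interior h0
  replace hf : ∀ v ∈ interior B, f v < 0 := by simpa using hf
  obtain ⟨l, hl, -⟩ := exists_extension_norm_eq A.direction f
  have hfB : ∀ v ∈ B, f v ≤ 0 :=
    hB.le_of_forall_interior_le hBint f.continuous fun v hv => (hf v hv).le
  have hle : ∀ v : A.direction, l (e v) = f v + l x := fun v => by rw [he, map_add, hl]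
  refine ⟨l, fun y hy => ?_, ?_⟩
  · let v : A.direction := ⟨y - x, AffineSubspace.vsub_mem_direction
      (subset_affineSpan ℝ C hy) (subset_affineSpan ℝ C hxC)⟩
    have hv : (e v : E) = y := by simp [he, v]
    have hvB : v ∈ B := by simpa [B, hv] using hy
    have hly := hle v
    rw [hv] at hly
    linarith [hfB v hvB]
  · obtain ⟨z, hz⟩ := hBint
    exact ⟨e z, interior_subset (s := B) hz, by linarith [hle z, hf z hz]⟩

theorem exists_isExposed_ne_of_notMem_intrinsicInterior {C : Set E} (hC : Convex ℝ C) {x : E}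
    (hxC : x ∈ C) (hx : x ∉ intrinsicInterior ℝ C) :
    ∃ G, IsExposed ℝ C G ∧ x ∈ G ∧ G ≠ C := by
  obtain ⟨l, hle, y, hy, hlt⟩ := exists_lt_of_notMem_intrinsicInterior hC hxC hx
  refine ⟨l.toExposed C, ContinuousLinearMap.toExposed.isExposed, ⟨hxC, hle⟩, fun hG => ?_⟩
  have hyG : y ∈ l.toExposed C := hG.symm ▸ hy
  exact (hyG.2 x hxC).not_gt hlt

end Separation

section Chamber

variable {E F : Type*} [AddCommGroup E] [Module ℝ E] [TopologicalSpace E]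
  [AddCommGroup F] [Module ℝ F] [TopologicalSpace F]

/-- The map `σ` of the statement. -/
def chamber (D : Set (E × F)) (x : E) : Set E :=
  ⋂₀ {S | ∃ G, IsExposed ℝ D G ∧ S = Prod.fst '' G ∧ x ∈ S}

variable {D : Set (E × F)}

theorem mem_chamber_self (x : E) : x ∈ chamber D x := by
  rintro S ⟨G, -, rfl, hxS⟩
  exact hxS

theorem chamber_subset_of_mem {x z : E} (hxz : x ∈ chamber D z) : chamber D x ⊆ chamber D z := by
  rintro u hu S ⟨G, hG, rfl, hzS⟩
  exact hu _ ⟨G, hG, rfl, hxz _ ⟨G, hG, rfl, hzS⟩⟩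

theorem Convex.chamber (hD : Convex ℝ D) (x : E) : Convex ℝ (chamber D x) := by
  refine convex_sInter ?_
  rintro S ⟨G, hG, rfl, -⟩
  exact (hG.convex hD).linear_image (LinearMap.fst ℝ E F)

end Chamber

theorem mem_intrinsicInterior_chamber {E F : Type*} [NormedAddCommGroup E] [NormedSpace ℝ E]
    [FiniteDimensional ℝ E] [AddCommGroup F] [Module ℝ F] [TopologicalSpace F]
    {D : Set (E × F)} (hD : Convex ℝ D) {x : E}
    (hface : ∀ G, IsExposed ℝ (chamber D x) G → G.Nonempty → G ∈ range (chamber D)) :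
    x ∈ intrinsicInterior ℝ (chamber D x) := by
  by_contra hx
  obtain ⟨G, hG, hxG, hGne⟩ :=
    exists_isExposed_ne_of_notMem_intrinsicInterior (hD.chamber x) (mem_chamber_self x) hx
  obtain ⟨z, rfl⟩ := hface G hG ⟨x, hxG⟩
  exact hGne (hG.subset.antisymm (chamber_subset_of_mem hxG))

theorem stmt_6_general {nx ny : ℕ}
    (D : Set ((Fin nx → ℝ) × (Fin ny → ℝ))) (hDconv : Convex ℝ D)
    (X : Set (Fin nx → ℝ))
    (σ : (Fin nx → ℝ) → Set (Fin nx → ℝ))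
    (hσ : ∀ x, σ x = ⋂₀ {S | ∃ F : Set ((Fin nx → ℝ) × (Fin ny → ℝ)),
      IsExposed ℝ D F ∧ S = Prod.fst '' F ∧ x ∈ S})
    (𝒞 : Set (Set (Fin nx → ℝ))) (h𝒞 : 𝒞 = σ '' X)
    (hpartition : ∀ x ∈ X, ∃! C, C ∈ 𝒞 ∧ x ∈ intrinsicInterior ℝ C)
    (hfaceclosed : ∀ C ∈ 𝒞, ∀ F, IsExposed ℝ C F → F.Nonempty → F ∈ 𝒞) :
    ∀ x ∈ X, ∀ C ∈ 𝒞, (x ∈ intrinsicInterior ℝ C ↔ C = σ x) := by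
  obtain rfl : σ = chamber D := funext hσ
  subst h𝒞
  have hri : ∀ x ∈ X, x ∈ intrinsicInterior ℝ (chamber D x) := fun x hx =>
    mem_intrinsicInterior_chamber hDconv fun G hG hGne => by
      obtain ⟨z, -, rfl⟩ := hfaceclosed _ (mem_image_of_mem _ hx) G hG hGne
      exact mem_range_self z
  intro x hx C hC
  refine ⟨fun hxC => ?_, fun hCx => hCx ▸ hri x hx⟩
  exact (hpartition x hx).unique ⟨hC, hxC⟩ ⟨mem_image_of_mem _ hx, hri x hx⟩

theorem stmt_6 {nx ny : ℕ}
    (D : Set ((Fin nx → ℝ) × (Fin ny → ℝ))) (hDconv : Convex ℝ D) (hDcomp : IsCompact D)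
    (X : Set (Fin nx → ℝ)) (hX : X = Prod.fst '' D)
    (σ : (Fin nx → ℝ) → Set (Fin nx → ℝ))
    (hσ : ∀ x, σ x = ⋂₀ {S | ∃ F : Set ((Fin nx → ℝ) × (Fin ny → ℝ)),
      IsExposed ℝ D F ∧ S = Prod.fst '' F ∧ x ∈ S})
    (𝒞 : Set (Set (Fin nx → ℝ))) (h𝒞 : 𝒞 = σ '' X)
    (hpartition : ∀ x ∈ X, ∃! C, C ∈ 𝒞 ∧ x ∈ intrinsicInterior ℝ C)
    (hfaceclosed : ∀ C ∈ 𝒞, ∀ F, IsExposed ℝ C F → F.Nonempty → F ∈ 𝒞) :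
    ∀ x ∈ X, ∀ C ∈ 𝒞, (x ∈ intrinsicInterior ℝ C ↔ C = σ x) :=
  stmt_6_general D hDconv X σ hσ 𝒞 h𝒞 hpartition hfaceclosed
end

section
/- Let D = {(x,y) : Ax+By ≤ b} ⊆ ℝⁿˣ × ℝⁿʸ and let F be a face of D of dimension n > nₓ with x ∈ π(F). Then there exists a face F̂ of D with F̂ ⊆ F, dim(F̂) ≤ nₓ, and x ∈ π(F̂). Consequently, σ(x) = ⋂{π(F) : F ∈ ℱ_{≤nₓ}(D), x ∈ π(F)}. -/
open Module Set Filter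

noncomputable def Lmap {nx ny m : ℕ} (A : Matrix (Fin m) (Fin nx) ℝ)
    (B : Matrix (Fin m) (Fin ny) ℝ) :
    ((Fin nx → ℝ) × (Fin ny → ℝ)) →ₗ[ℝ] (Fin m → ℝ) :=
  A.mulVecLin.comp (LinearMap.fst ℝ _ _) + B.mulVecLin.comp (LinearMap.snd ℝ _ _)

lemma key {nx ny m : ℕ} (A : Matrix (Fin m) (Fin nx) ℝ) (B : Matrix (Fin m) (Fin ny) ℝ)
    (b : Fin m → ℝ)
    (D : Set ((Fin nx → ℝ) × (Fin ny → ℝ)))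
    (hD : D = {z | A.mulVec z.1 + B.mulVec z.2 ≤ b})
    (hDcomp : IsCompact D)
    (x : Fin nx → ℝ) (F : Set ((Fin nx → ℝ) × (Fin ny → ℝ)))
    (hF : IsExposed ℝ D F) (hx : x ∈ Prod.fst '' F) :
    ∃ Fh, IsExposed ℝ D Fh ∧ Fh ⊆ F ∧
      Module.finrank ℝ (vectorSpan ℝ Fh) ≤ nx ∧ x ∈ Prod.fst '' Fh := by
  classical
  set L : (Fin nx → ℝ) × (Fin ny → ℝ) →ₗ[ℝ] (Fin m → ℝ) := Lmap A B with hLdef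
  have hL : ∀ w : (Fin nx → ℝ) × (Fin ny → ℝ), L w = A.mulVec w.1 + B.mulVec w.2 := by
    intro w; simp [hLdef, Lmap]
  have hmem : ∀ w : (Fin nx → ℝ) × (Fin ny → ℝ), w ∈ D ↔ ∀ j, L w j ≤ b j := by
    intro w
    rw [hD]
    simp [hL, Pi.le_def]
  -- convexity of D
  have hDconv : Convex ℝ D := by
    have : D = ⋂ j, {w : (Fin nx → ℝ) × (Fin ny → ℝ) | L w j ≤ b j} := by
      ext w; simp [hmem w]
    rw [this]
    refine convex_iInter fun j => ?_
    exact convex_halfSpace_le ((LinearMap.proj j).comp L).isLinear _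
  have hFconv : Convex ℝ F := hF.convex hDconv
  have hFcomp : IsCompact F := hF.isCompact hDcomp
  -- the fiber over x
  set K : Set (Fin ny → ℝ) := {y | (x, y) ∈ F} with hKdef
  obtain ⟨z, hzF, hz1⟩ := hx
  have hKne : K.Nonempty := ⟨z.2, by simpa [hKdef, ← hz1] using hzF⟩
  have hKcomp : IsCompact K := by
    have h1 : IsCompact (F ∩ Prod.fst ⁻¹' {x}) :=
      hFcomp.inter_right (isClosed_singleton.preimage continuous_fst)
    have h2 : K = Prod.snd '' (F ∩ Prod.fst ⁻¹' {x}) := by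
      ext y
      constructor
      · intro hy; exact ⟨(x, y), ⟨hy, rfl⟩, rfl⟩
      · rintro ⟨p, ⟨hpF, hp1⟩, hp2⟩
        have : p = (x, y) := by
          ext <;> simp_all
        rwa [this] at hpF
    rw [h2]
    exact h1.image continuous_snd
  have hKconv : Convex ℝ K := by
    intro y1 hy1 y2 hy2 a c ha hc hac
    have := hFconv hy1 hy2 ha hc hac
    have heq : a • ((x, y1) : (Fin nx → ℝ) × (Fin ny → ℝ)) + c • (x, y2) = (x, a • y1 + c • y2) := by
      ext i
      · simp [← add_smul, hac]
      · simp
    rwa [heq] at this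
  obtain ⟨y0, hy0⟩ := hKcomp.extremePoints_nonempty hKne
  rw [mem_extremePoints] at hy0
  set z0 : (Fin nx → ℝ) × (Fin ny → ℝ) := (x, y0) with hz0def
  have hz0F : z0 ∈ F := hy0.1
  have hz0D : z0 ∈ D := hF.subset hz0F
  -- active set
  set J : Finset (Fin m) := Finset.univ.filter (fun j => L z0 j = b j) with hJdef
  have hJmem : ∀ j, j ∈ J ↔ L z0 j = b j := by
    intro j; simp [hJdef]
  -- the candidate face
  set Fh : Set ((Fin nx → ℝ) × (Fin ny → ℝ)) := {w | w ∈ D ∧ ∀ j ∈ J, L w j = b j} with hFhdef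
  have hz0Fh : z0 ∈ Fh := ⟨hz0D, fun j hj => (hJmem j).1 hj⟩
  -- moving within Fh
  have hdir : ∀ d : (Fin nx → ℝ) × (Fin ny → ℝ), (∀ j ∈ J, L d j = 0) → ∃ t : ℝ, 0 < t ∧ z0 + t • d ∈ Fh := by
    intro d hd
    have hev : ∀ j : Fin m, ∀ᶠ t : ℝ in nhdsWithin 0 (Set.Ioi 0), L (z0 + t • d) j ≤ b j := by
      intro j
      have hcalc : ∀ t : ℝ, L (z0 + t • d) j = L z0 j + t * L d j := by
        intro t; simp [map_add, map_smul]
      by_cases hj : j ∈ J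
      · refine Filter.Eventually.of_forall fun t => ?_
        rw [hcalc, hd j hj, mul_zero, add_zero]
        exact le_of_eq ((hJmem j).1 hj)
      · have hlt : L z0 j < b j :=
          lt_of_le_of_ne ((hmem z0).1 hz0D j) (fun h => hj ((hJmem j).2 h))
        have hcont : Filter.Tendsto (fun t : ℝ => L z0 j + t * L d j)
            (nhdsWithin 0 (Set.Ioi 0)) (nhds (L z0 j)) := by
          have : Filter.Tendsto (fun t : ℝ => L z0 j + t * L d j) (nhds 0)
              (nhds (L z0 j + 0 * L d j)) := by
            exact (continuous_const.add (continuous_id.mul continuous_const)).tendsto 0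
          simpa using this.mono_left nhdsWithin_le_nhds
        filter_upwards [hcont.eventually_lt_const hlt] with t ht
        rw [hcalc]; exact ht.le
    have hall : ∀ᶠ t : ℝ in nhdsWithin 0 (Set.Ioi 0), ∀ j, L (z0 + t • d) j ≤ b j :=
      Filter.eventually_all.2 hev
    obtain ⟨t, ht1, ht2⟩ := (hall.and (self_mem_nhdsWithin : Set.Ioi (0:ℝ) ∈ _)).exists
    refine ⟨t, ht2, (hmem _).2 ht1, fun j hj => ?_⟩
    have : L (z0 + t • d) j = L z0 j + t * L d j := by simp [map_add, map_smul]
    rw [this, hd j hj, mul_zero, add_zero]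
    exact (hJmem j).1 hj
  -- Fh ⊆ F
  have hFhF : Fh ⊆ F := by
    intro w hw
    have hd : ∀ j ∈ J, L (z0 - w) j = 0 := by
      intro j hj
      have h1 : L z0 j = b j := (hJmem j).1 hj
      have h2 : L w j = b j := hw.2 j hj
      simp [map_sub, h1, h2]
    obtain ⟨t, ht, hmemFh⟩ := hdir (z0 - w) hd
    have hx2D : z0 + t • (z0 - w) ∈ D := hmemFh.1
    have hwD : w ∈ D := hw.1
    have hseg : z0 ∈ openSegment ℝ w (z0 + t • (z0 - w)) := by
      refine ⟨t / (1 + t), 1 / (1 + t), by positivity, by positivity, ?_, ?_⟩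
      · field_simp; ring
      · have h1t : (1 : ℝ) + t ≠ 0 := by positivity
        match_scalars <;> field_simp <;> ring
    exact (hF.isExtreme).2 hwD hx2D hz0F hseg
  -- dimension bound
  have hspan : ∀ v ∈ vectorSpan ℝ Fh, ∀ j ∈ J, L v j = 0 := by
    intro v hv
    have hW : vectorSpan ℝ Fh ≤
        { carrier := {v : (Fin nx → ℝ) × (Fin ny → ℝ) | ∀ j ∈ J, L v j = 0}
          zero_mem' := by simp
          add_mem' := by intro a c ha hc j hj; simp [map_add, ha j hj, hc j hj]
          smul_mem' := by intro r a ha j hj; simp [map_smul, ha j hj] } := by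
      rw [vectorSpan_def]
      refine Submodule.span_le.2 ?_
      rintro u ⟨p, hp, q, hq, rfl⟩
      intro j hj
      simp only [vsub_eq_sub, map_sub, Pi.sub_apply]
      rw [hp.2 j hj, hq.2 j hj, sub_self]
    exact hW hv
  have hinj : ∀ v ∈ vectorSpan ℝ Fh, v.1 = 0 → v = 0 := by
    intro v hv hv1
    by_contra hvne
    have hv2 : v.2 ≠ 0 := by
      intro h; exact hvne (Prod.ext hv1 h)
    have hvJ : ∀ j ∈ J, L v j = 0 := hspan v hv
    have hvJ' : ∀ j ∈ J, L (-v) j = 0 := by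
      intro j hj; simp [map_neg, hvJ j hj]
    obtain ⟨t1, ht1, hm1⟩ := hdir v hvJ
    obtain ⟨t2, ht2, hm2⟩ := hdir (-v) hvJ'
    have hp1 : (z0 + t1 • v) = ((x, y0 + t1 • v.2) : (Fin nx → ℝ) × (Fin ny → ℝ)) := by
      ext i
      · simp [hz0def, hv1]
      · simp [hz0def]
    have hp2 : (z0 + t2 • (-v)) = ((x, y0 - t2 • v.2) : (Fin nx → ℝ) × (Fin ny → ℝ)) := by
      ext i
      · simp [hz0def, hv1]
      · simp [hz0def, sub_eq_add_neg]
    have hk1 : y0 + t1 • v.2 ∈ K := by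
      have := hFhF hm1; rw [hp1] at this; exact this
    have hk2 : y0 - t2 • v.2 ∈ K := by
      have := hFhF hm2; rw [hp2] at this; exact this
    have hseg : y0 ∈ openSegment ℝ (y0 + t1 • v.2) (y0 - t2 • v.2) := by
      refine ⟨t2 / (t1 + t2), t1 / (t1 + t2), by positivity, by positivity, ?_, ?_⟩
      · field_simp; ring
      · have h12 : t1 + t2 ≠ 0 := by positivity
        match_scalars <;> field_simp <;> ring
    have := (hy0.2 _ hk1 _ hk2 hseg).1
    have : t1 • v.2 = 0 := by
      have h := congrArg (fun w => w - y0) this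
      simpa using h
    exact hv2 (by simpa [ht1.ne'] using (smul_eq_zero.1 this))
  -- conclude dimension
  have hdim : Module.finrank ℝ (vectorSpan ℝ Fh) ≤ nx := by
    set f : (vectorSpan ℝ Fh) →ₗ[ℝ] (Fin nx → ℝ) :=
      (LinearMap.fst ℝ (Fin nx → ℝ) (Fin ny → ℝ)).comp (vectorSpan ℝ Fh).subtype with hfdef
    have hfinj : Function.Injective f := by
      intro a c hac
      have hsub : (a : (Fin nx → ℝ) × (Fin ny → ℝ)) - c ∈ vectorSpan ℝ Fh := sub_mem a.2 c.2
      have h1 : ((a : (Fin nx → ℝ) × (Fin ny → ℝ)) - c).1 = 0 := by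
        have : (a : (Fin nx → ℝ) × (Fin ny → ℝ)).1 = (c : (Fin nx → ℝ) × (Fin ny → ℝ)).1 := hac
        simp [this]
      have := hinj _ hsub h1
      exact Subtype.ext (sub_eq_zero.1 this)
    calc Module.finrank ℝ (vectorSpan ℝ Fh) ≤ Module.finrank ℝ (Fin nx → ℝ) :=
          LinearMap.finrank_le_finrank_of_injective hfinj
      _ = nx := Module.finrank_fin_fun ℝ
  -- exposedness
  have hFhexp : IsExposed ℝ D Fh := by
    intro _
    set llin : (Fin nx → ℝ) × (Fin ny → ℝ) →ₗ[ℝ] ℝ := ∑ j ∈ J, (LinearMap.proj j).comp L with hllin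
    refine ⟨llin.toContinuousLinearMap, ?_⟩
    have hlval : ∀ w : (Fin nx → ℝ) × (Fin ny → ℝ), llin.toContinuousLinearMap w = ∑ j ∈ J, L w j := by
      intro w; simp [hllin, LinearMap.sum_apply]
    ext w
    constructor
    · rintro ⟨hwD, hweq⟩
      refine ⟨hwD, fun u hu => ?_⟩
      rw [hlval, hlval]
      calc ∑ j ∈ J, L u j ≤ ∑ j ∈ J, b j :=
            Finset.sum_le_sum fun j _ => (hmem u).1 hu j
        _ = ∑ j ∈ J, L w j := by
            refine Finset.sum_congr rfl fun j hj => (hweq j hj).symm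
    · rintro ⟨hwD, hwmax⟩
      refine ⟨hwD, ?_⟩
      have h1 : ∑ j ∈ J, b j ≤ ∑ j ∈ J, L w j := by
        have := hwmax z0 hz0D
        rw [hlval, hlval] at this
        calc ∑ j ∈ J, b j = ∑ j ∈ J, L z0 j :=
              Finset.sum_congr rfl fun j hj => ((hJmem j).1 hj).symm
          _ ≤ ∑ j ∈ J, L w j := this
      have h2 : ∀ j ∈ J, L w j ≤ b j := fun j _ => (hmem w).1 hwD j
      have h3 : ∑ j ∈ J, L w j = ∑ j ∈ J, b j :=
        le_antisymm (Finset.sum_le_sum fun j hj => h2 j hj) h1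
      exact fun j hj => ((Finset.sum_eq_sum_iff_of_le h2).1 h3) j hj
  exact ⟨Fh, hFhexp, hFhF, hdim, ⟨z0, hz0Fh, rfl⟩⟩

theorem stmt_8 {nx ny m : ℕ}
    (A : Matrix (Fin m) (Fin nx) ℝ) (B : Matrix (Fin m) (Fin ny) ℝ) (b : Fin m → ℝ)
    (D : Set ((Fin nx → ℝ) × (Fin ny → ℝ)))
    (hD : D = {z | A.mulVec z.1 + B.mulVec z.2 ≤ b})
    (hDcomp : IsCompact D)
    (hDfull : Module.finrank ℝ (vectorSpan ℝ D) = nx + ny)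
    (x : Fin nx → ℝ) :
    (∀ F, IsExposed ℝ D F → F.Nonempty → x ∈ Prod.fst '' F →
        nx < Module.finrank ℝ (vectorSpan ℝ F) →
        ∃ Fh, IsExposed ℝ D Fh ∧ Fh ⊆ F ∧
          Module.finrank ℝ (vectorSpan ℝ Fh) ≤ nx ∧ x ∈ Prod.fst '' Fh)
    ∧ ⋂₀ {S | ∃ F, IsExposed ℝ D F ∧ F.Nonempty ∧ S = Prod.fst '' F ∧ x ∈ S}
      = ⋂₀ {S | ∃ F, IsExposed ℝ D F ∧ F.Nonempty ∧
            Module.finrank ℝ (vectorSpan ℝ F) ≤ nx ∧ S = Prod.fst '' F ∧ x ∈ S} := by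
  constructor
  · intro F hFexp hFne hx _
    exact key A B b D hD hDcomp x F hFexp hx
  · apply Set.Subset.antisymm
    · apply Set.sInter_subset_sInter
      rintro S ⟨F, h1, h2, _, h4, h5⟩
      exact ⟨F, h1, h2, h4, h5⟩
    · intro p hp
      rw [Set.mem_sInter]
      rintro S ⟨F, hFexp, hFne, rfl, hxS⟩
      obtain ⟨Fh, hFhexp, hFhsub, hFhdim, hxFh⟩ := key A B b D hD hDcomp x F hFexp hxS
      obtain ⟨q, hq, hq1⟩ := hxFh
      have hFhne : Fh.Nonempty := ⟨q, hq⟩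
      have hmem : Prod.fst '' Fh ∈
          {S | ∃ F, IsExposed ℝ D F ∧ F.Nonempty ∧
            Module.finrank ℝ (vectorSpan ℝ F) ≤ nx ∧ S = Prod.fst '' F ∧ x ∈ S} :=
        ⟨Fh, hFhexp, hFhne, hFhdim, rfl, ⟨q, hq, hq1⟩⟩
      exact Set.image_mono hFhsub (hp _ hmem)
end

section
/- Consider the LP min{⟨c,y⟩ : B_f y ≤ b_f − A_f x} over y ∈ ℝⁿʸ, for fixed x and c on the unit sphere. If this LP has two distinct optimal solutions, then c lies in the span of at most n_y − 1 rows of B_f (i.e., c belongs to a linear subspace of dimension ≤ n_y − 1 spanned by rows of B_f). -/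
open Matrix

theorem stmt_10 {nx ny mf : ℕ}
    (Af : Matrix (Fin mf) (Fin nx) ℝ) (Bf : Matrix (Fin mf) (Fin ny) ℝ) (bf : Fin mf → ℝ)
    (x : Fin nx → ℝ)
    (hfeas : {y : Fin ny → ℝ | Bf.mulVec y ≤ bf - Af.mulVec x}.Nonempty)
    (hcomp : IsCompact {y : Fin ny → ℝ | Bf.mulVec y ≤ bf - Af.mulVec x})
    (c : Fin ny → ℝ) (hc : ∑ i, c i ^ 2 = 1)
    (y₁ y₂ : Fin ny → ℝ) (hne : y₁ ≠ y₂)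
    (hfeas₁ : Bf.mulVec y₁ ≤ bf - Af.mulVec x)
    (hfeas₂ : Bf.mulVec y₂ ≤ bf - Af.mulVec x)
    (hopt₁ : ∀ y : Fin ny → ℝ, Bf.mulVec y ≤ bf - Af.mulVec x → c ⬝ᵥ y₁ ≤ c ⬝ᵥ y)
    (hopt₂ : ∀ y : Fin ny → ℝ, Bf.mulVec y ≤ bf - Af.mulVec x → c ⬝ᵥ y₂ ≤ c ⬝ᵥ y) :
    ∃ s : Finset (Fin mf), s.card ≤ ny - 1 ∧
      c ∈ Submodule.span ℝ (Bf '' (↑s : Set (Fin mf))) := by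
  classical
  rcases Nat.eq_zero_or_pos ny with h0 | hny
  · subst h0
    exact absurd (Subsingleton.elim y₁ y₂) hne
  set rhs := bf - Af.mulVec x with hrhs
  have hopt_eq : c ⬝ᵥ y₁ = c ⬝ᵥ y₂ := le_antisymm (hopt₁ y₂ hfeas₂) (hopt₂ y₁ hfeas₁)
  set y : Fin ny → ℝ := (2⁻¹ : ℝ) • (y₁ + y₂) with hy
  have hmid : ∀ i, Bf.mulVec y i = 2⁻¹ * (Bf.mulVec y₁ i + Bf.mulVec y₂ i) := by
    intro i
    simp [hy, Matrix.mulVec_smul, Matrix.mulVec_add]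
    ring
  have hyfeas : Bf.mulVec y ≤ rhs := by
    intro i
    have h1 := hfeas₁ i
    have h2 := hfeas₂ i
    rw [hmid i]
    linarith
  have hcy : c ⬝ᵥ y = c ⬝ᵥ y₁ := by
    have h : c ⬝ᵥ y = 2⁻¹ * (c ⬝ᵥ y₁ + c ⬝ᵥ y₂) := by
      simp [hy, dotProduct_smul, dotProduct_add, smul_eq_mul]
      ring
    rw [h, ← hopt_eq]; ring
  set T : Set (Fin mf) := {i | Bf.mulVec y i = rhs i} with hT
  -- Step 1 : c belongs to the span of the active rows
  have hcV : c ∈ Submodule.span ℝ (Bf '' T) := by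
    by_contra hcV
    obtain ⟨f, hfc, hfbot⟩ :=
      Submodule.exists_dual_map_eq_bot_of_notMem hcV inferInstance
    have hfzero : ∀ v ∈ Submodule.span ℝ (Bf '' T), f v = 0 := by
      intro v hv
      have h : f v ∈ (Submodule.span ℝ (Bf '' T)).map f := Submodule.mem_map_of_mem hv
      rw [hfbot] at h
      simpa using h
    set w : Fin ny → ℝ := fun j => f (fun k => if j = k then 1 else 0) with hw
    have hfw : ∀ v : Fin ny → ℝ, f v = v ⬝ᵥ w := by
      intro v
      rw [LinearMap.pi_apply_eq_sum_univ f v]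
      simp [dotProduct, hw, smul_eq_mul]
    set u : Fin ny → ℝ := (f c) • w with hu
    have hcu : 0 < c ⬝ᵥ u := by
      have h : c ⬝ᵥ u = (f c) * (c ⬝ᵥ w) := by
        simp [hu, dotProduct_smul, smul_eq_mul]
      rw [h, ← hfw c]
      exact mul_self_pos.2 hfc
    have hTu : ∀ i ∈ T, Bf i ⬝ᵥ u = 0 := by
      intro i hi
      have h0 : f (Bf i) = 0 := hfzero _ (Submodule.subset_span ⟨i, hi, rfl⟩)
      have hwi : Bf i ⬝ᵥ w = 0 := by rw [← hfw]; exact h0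
      simp [hu, dotProduct_smul, hwi]
    set g : Fin mf → ℝ := fun i => rhs i - Bf.mulVec y i with hg
    have hgpos : ∀ i, i ∉ T → 0 < g i := by
      intro i hi
      have h := hyfeas i
      have hne' : Bf.mulVec y i ≠ rhs i := hi
      have := lt_of_le_of_ne h hne'
      simp only [hg]
      linarith
    set εf : Fin mf → ℝ := fun i => if i ∈ T then 1 else g i / (|Bf i ⬝ᵥ u| + 1) with hεf
    have hεfpos : ∀ i, 0 < εf i := by
      intro i
      simp only [hεf]
      split
      · norm_num
      · exact div_pos (hgpos i (by assumption)) (by positivity)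
    set F : Finset ℝ := insert 1 (Finset.univ.image εf) with hF
    have hFne : F.Nonempty := ⟨1, Finset.mem_insert_self _ _⟩
    have hεpos : 0 < F.min' hFne := by
      have hmem : F.min' hFne ∈ insert (1:ℝ) (Finset.univ.image εf) := F.min'_mem hFne
      rcases Finset.mem_insert.1 hmem with h | h
      · rw [h]; norm_num
      · rcases Finset.mem_image.1 h with ⟨i, -, hi⟩
        rw [← hi]; exact hεfpos i
    set ε := F.min' hFne with hε
    have hεle : ∀ i, ε ≤ εf i := fun i =>
      F.min'_le _ (Finset.mem_insert_of_mem (Finset.mem_image_of_mem _ (Finset.mem_univ i)))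
    set y' := y - ε • u with hy'
    have hmv : ∀ i, Bf.mulVec y' i = Bf.mulVec y i - ε * (Bf i ⬝ᵥ u) := by
      intro i
      simp [hy', Matrix.mulVec_sub, Matrix.mulVec_smul, Matrix.mulVec, smul_eq_mul]
    have hy'feas : Bf.mulVec y' ≤ rhs := by
      intro i
      rw [hmv i]
      by_cases hiT : i ∈ T
      · rw [hTu i hiT]
        have heq : Bf.mulVec y i = rhs i := hiT
        linarith
      · have h1 : ε ≤ g i / (|Bf i ⬝ᵥ u| + 1) := by
          have h := hεle i
          simpa [hεf, hiT] using h
        have h2 : 0 < g i := hgpos i hiT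
        have h3 : (0:ℝ) ≤ |Bf i ⬝ᵥ u| := abs_nonneg _
        have h4 : -|Bf i ⬝ᵥ u| ≤ Bf i ⬝ᵥ u := neg_abs_le _
        have h5 : ε * |Bf i ⬝ᵥ u| ≤ g i / (|Bf i ⬝ᵥ u| + 1) * |Bf i ⬝ᵥ u| :=
          mul_le_mul_of_nonneg_right h1 h3
        have h6 : g i / (|Bf i ⬝ᵥ u| + 1) * |Bf i ⬝ᵥ u| < g i := by
          rw [div_mul_eq_mul_div, div_lt_iff₀ (by positivity)]
          nlinarith
        have h7 : -(ε * (Bf i ⬝ᵥ u)) ≤ ε * |Bf i ⬝ᵥ u| := by nlinarith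
        have hgi : g i = rhs i - Bf.mulVec y i := rfl
        linarith
    have hle := hopt₁ y' hy'feas
    have hlt : c ⬝ᵥ y' < c ⬝ᵥ y₁ := by
      have h : c ⬝ᵥ y' = c ⬝ᵥ y - ε * (c ⬝ᵥ u) := by
        simp [hy', dotProduct_sub, dotProduct_smul, smul_eq_mul]
      rw [h, hcy]
      nlinarith
    linarith
  -- Step 2 : active rows are orthogonal to d = y₂ - y₁
  set d := y₂ - y₁ with hd
  have hdne : d ≠ 0 := sub_ne_zero.2 hne.symm
  have hTd : ∀ i ∈ T, Bf i ⬝ᵥ d = 0 := by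
    intro i hi
    have h1 := hfeas₁ i
    have h2 := hfeas₂ i
    have heq : Bf.mulVec y i = rhs i := hi
    have hm := hmid i
    have e1 : Bf.mulVec y₁ i = rhs i := by linarith
    have e2 : Bf.mulVec y₂ i = rhs i := by linarith
    have hsub : Bf i ⬝ᵥ d = Bf.mulVec y₂ i - Bf.mulVec y₁ i := by
      simp [hd, dotProduct_sub, Matrix.mulVec]
    rw [hsub, e1, e2]
    ring
  -- Step 3 : the kernel of ⟨·, d⟩ has dimension ny - 1
  set φ : (Fin ny → ℝ) →ₗ[ℝ] ℝ :=
    { toFun := fun v => v ⬝ᵥ d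
      map_add' := fun a b => add_dotProduct a b d
      map_smul' := fun r a => smul_dotProduct r a d } with hφ
  have hφd : φ d ≠ 0 := by
    intro h
    exact hdne (dotProduct_self_eq_zero.1 h)
  have hrange : LinearMap.range φ = ⊤ := by
    rw [LinearMap.range_eq_top]
    intro r
    refine ⟨(r / φ d) • d, ?_⟩
    rw [_root_.map_smul, smul_eq_mul, div_mul_cancel₀ _ hφd]
  have hker : Module.finrank ℝ (LinearMap.ker φ) = ny - 1 := by
    have hrank := LinearMap.finrank_range_add_finrank_ker φ
    rw [hrange] at hrank
    rw [finrank_top, Module.finrank_self, Module.finrank_fin_fun] at hrank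
    omega
  -- Step 4 : extract a linearly independent subset and pick indices
  obtain ⟨t, htsub, htspan, htind⟩ := exists_linearIndependent ℝ (Bf '' T)
  have htker : t ⊆ (LinearMap.ker φ : Set (Fin ny → ℝ)) := by
    intro v hv
    obtain ⟨i, hi, rfl⟩ := htsub hv
    exact LinearMap.mem_ker.2 (hTd i hi)
  have htfin : t.Finite := htind.set_finite_of_isNoetherian
  haveI := htfin.fintype
  have hcard : t.toFinset.card ≤ ny - 1 := by
    rw [← finrank_span_set_eq_card htind, ← hker]
    exact Submodule.finrank_mono (Submodule.span_le.2 htker)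
  have hct : c ∈ Submodule.span ℝ t := by rw [htspan]; exact hcV
  by_cases ht0 : t = ∅
  · exfalso
    rw [ht0] at hct
    simp only [Submodule.span_empty, Submodule.mem_bot] at hct
    rw [hct] at hc
    simp at hc
  · obtain ⟨v0, hv0⟩ := Set.nonempty_iff_ne_empty.2 ht0
    obtain ⟨i0, -, -⟩ := htsub hv0
    set idx : (Fin ny → ℝ) → Fin mf :=
      fun v => if h : v ∈ Bf '' T then h.choose else i0 with hidxdef
    have hidx : ∀ v ∈ t, Bf (idx v) = v := by
      intro v hv
      have h := htsub hv
      simp only [hidxdef, dif_pos h]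
      exact h.choose_spec.2
    refine ⟨t.toFinset.image idx, ?_, ?_⟩
    · exact le_trans Finset.card_image_le hcard
    · have hsubset : t ⊆ Bf '' (↑(t.toFinset.image idx) : Set (Fin mf)) := by
        intro v hv
        refine ⟨idx v, ?_, hidx v hv⟩
        simp only [Finset.coe_image, Set.mem_image, Finset.mem_coe, Set.mem_toFinset]
        exact ⟨v, by simpa using hv, rfl⟩
      exact Submodule.span_mono hsubset hct
end

section
/- Let S : X → 𝒫(ℝᵐ) be a set-valued map affine on a convex set K with nonempty compact values, let y₁,...,y_k : K → ℝᵐ be affine selections with yᵢ(x') ∈ S(x') for all x' ∈ K and all i, and let x̄ ∈ ri(K) with S(x̄) = conv{y₁(x̄),...,y_k(x̄)}. Then S(x) = conv{y₁(x),...,y_k(x)} for all x ∈ K. -/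
open Pointwise

theorem stmt_19 {n m k : ℕ} (K : Set (Fin n → ℝ)) (hKconv : Convex ℝ K)
    (S : (Fin n → ℝ) → Set (Fin m → ℝ))
    (hSne : ∀ x ∈ K, (S x).Nonempty) (hScomp : ∀ x ∈ K, IsCompact (S x))
    (hSconv : ∀ x ∈ K, Convex ℝ (S x))
    (hSaff : ∀ x₀ ∈ K, ∀ x₁ ∈ K, ∀ η ∈ Set.Ioo (0:ℝ) 1,
      S (η • x₁ + (1 - η) • x₀) = η • S x₁ + (1 - η) • S x₀)
    (y : Fin k → (Fin n → ℝ) → (Fin m → ℝ))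
    (hyaff : ∀ i, ∀ x₀ ∈ K, ∀ x₁ ∈ K, ∀ η ∈ Set.Ioo (0:ℝ) 1,
      y i (η • x₁ + (1 - η) • x₀) = η • y i x₁ + (1 - η) • y i x₀)
    (hysel : ∀ i, ∀ x ∈ K, y i x ∈ S x)
    (xb : Fin n → ℝ) (hxb : xb ∈ intrinsicInterior ℝ K)
    (hconvhull : S xb = convexHull ℝ (Set.range fun i => y i xb)) :
    ∀ x ∈ K, S x = convexHull ℝ (Set.range fun i => y i x) := by
  have hxbK : xb ∈ K := intrinsicInterior_subset hxb
  intro x hx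
  -- Step 1: find ε > 0 with z := ε • (xb - x) + xb ∈ K
  obtain ⟨p, hp, hpx⟩ := mem_intrinsicInterior.mp hxb
  have hmem : ∀ t : ℝ, t • (xb - x) + xb ∈ affineSpan ℝ K := by
    intro t
    have h1 : xb ∈ affineSpan ℝ K := subset_affineSpan ℝ K hxbK
    have h2 : x ∈ affineSpan ℝ K := subset_affineSpan ℝ K hx
    have := AffineSubspace.smul_vsub_vadd_mem (affineSpan ℝ K) t h1 h2 h1
    simpa [vsub_eq_sub, vadd_eq_add] using this
  set f : ℝ → affineSpan ℝ K := fun t => ⟨t • (xb - x) + xb, hmem t⟩ with hf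
  have hcont : Continuous f :=
    Continuous.subtype_mk ((continuous_id.smul continuous_const).add continuous_const) _
  have hf0 : f 0 = p := Subtype.ext (by simp [hf, hpx])
  have hev : ∀ᶠ t in nhds (0:ℝ),
      f t ∈ interior ((↑) ⁻¹' K : Set (affineSpan ℝ K)) :=
    hcont.continuousAt.preimage_mem_nhds (isOpen_interior.mem_nhds (hf0 ▸ hp))
  obtain ⟨ε, hεK, hε⟩ :
      ∃ ε, f ε ∈ interior ((↑) ⁻¹' K : Set (affineSpan ℝ K)) ∧ 0 < ε :=
    ((hev.filter_mono nhdsWithin_le_nhds).and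
      (eventually_mem_nhdsWithin (s := Set.Ioi (0:ℝ)))).exists
  set z : Fin n → ℝ := ε • (xb - x) + xb with hz
  have hzK : z ∈ K := by have h := interior_subset hεK; exact h
  have h1ε : (0:ℝ) < 1 + ε := by linarith
  set η : ℝ := ε / (1 + ε) with hηdef
  have hη : η ∈ Set.Ioo (0:ℝ) 1 := by
    constructor
    · positivity
    · rw [hηdef, div_lt_one h1ε]; linarith
  have heq : η • x + (1 - η) • z = xb := by
    rw [hz, hηdef]
    have h1ε' : (1:ℝ) + ε ≠ 0 := ne_of_gt h1ε
    match_scalars <;> field_simp <;> ring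
  have hSx : S xb = η • S x + (1 - η) • S z := by
    rw [← heq]; exact hSaff z hzK x hx η hη
  have hyx : ∀ i, y i xb = η • y i x + (1 - η) • y i z := fun i => by
    rw [← heq]; exact hyaff i z hzK x hx η hη
  apply Set.Subset.antisymm
  · intro s hs
    by_contra hsC
    have hCclosed : IsClosed (convexHull ℝ (Set.range fun i => y i x)) :=
      ((Set.finite_range _).isCompact_convexHull ℝ).isClosed
    have hCconv : Convex ℝ (convexHull ℝ (Set.range fun i => y i x)) :=
      convex_convexHull ℝ _
    obtain ⟨ψ, u, hu, hus⟩ := geometric_hahn_banach_closed_point hCconv hCclosed hsC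
    obtain ⟨t, htS, htmax⟩ :=
      (hScomp z hzK).exists_isMaxOn (hSne z hzK) ψ.continuous.continuousOn
    have hpmem : η • s + (1 - η) • t ∈ S xb := by
      rw [hSx]
      exact Set.add_mem_add (Set.smul_mem_smul_set hs) (Set.smul_mem_smul_set htS)
    rw [hconvhull] at hpmem
    have hlt : ψ (η • s + (1 - η) • t) < η * u + (1 - η) * ψ t := by
      have hsub : (convexHull ℝ (Set.range fun i => y i xb)) ⊆
          {w | ψ w < η * u + (1 - η) * ψ t} := by
        apply convexHull_min _ (convex_halfSpace_lt ⟨map_add ψ, map_smul ψ⟩ _)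
        rintro w ⟨i, rfl⟩
        have h1 : ψ (y i x) < u := hu _ (subset_convexHull ℝ _ ⟨i, rfl⟩)
        have h2 : ψ (y i z) ≤ ψ t := htmax (hysel i z hzK)
        show ψ (y i xb) < η * u + (1 - η) * ψ t
        rw [hyx i, map_add, map_smul, map_smul, smul_eq_mul, smul_eq_mul]
        nlinarith [hη.1, hη.2]
      exact hsub hpmem
    rw [map_add, map_smul, map_smul, smul_eq_mul, smul_eq_mul] at hlt
    nlinarith [hη.1]
  · exact convexHull_min (by rintro w ⟨i, rfl⟩; exact hysel i x hx) (hSconv x hx)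
end
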